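/- Let m ≥ 2 and k ≥ 0 be integers. Then the composition operator C on L²(μ) is k-quasi-m-isometric if and only if both of the following hold: (a) for every r ∈ J_κ and i ∈ J_{η_r} the sequence (μ({x^r_{i,k+j+1}}))_{j∈ℤ₊} is a polynomial in j of degree at most m−2; (b) ∑_{p=0}^{m} (−1)^p binom(m,p) h_{p+k}(x_r) = 0 for every r ∈ J_κ. -/

import Mathlib

open MeasureTheory Finset

noncomputable section

/-- A real sequence indexed by the nonnegative integers is a polynomial in `n` of degree
at most `d` if some real polynomial of degree at most `d` interpolates it. -/
def IsPolySeq (d : ℕ) (γ : ℕ → ℝ) : Prop :=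
  ∃ q : Polynomial ℝ, q.natDegree ≤ d ∧ ∀ n : ℕ, q.eval (n : ℝ) = γ n

/-- `B_m(T) = ∑_{j=0}^m (-1)^j C(m,j) T*^{m-j} T^{m-j}`. -/
def BmOp {H : Type*} [NormedAddCommGroup H] [InnerProductSpace ℂ H] [CompleteSpace H]
    (m : ℕ) (T : H →L[ℂ] H) : H →L[ℂ] H :=
  ∑ j ∈ Finset.range (m + 1), ((-1 : ℂ) ^ j * (m.choose j : ℂ)) •
    ((ContinuousLinearMap.adjoint T) ^ (m - j) * T ^ (m - j))

/-- `T` is a `k`-quasi-`m`-isometry, i.e. `T*^k B_m(T) T^k = 0`. -/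
def IsQuasiIso {H : Type*} [NormedAddCommGroup H] [InnerProductSpace ℂ H] [CompleteSpace H]
    (k m : ℕ) (T : H →L[ℂ] H) : Prop :=
  (ContinuousLinearMap.adjoint T) ^ k * BmOp m T * T ^ k = 0

/-- The Radon–Nikodym derivative `h_p` of `μ ∘ φ^{-p}` with respect to `μ` in the discrete
setting: `h_p(x) = μ(φ^{-p}({x}))/μ({x})`. -/
def hRN {X : Type*} [MeasurableSpace X] (μ : Measure X) (φ : X → X) (p : ℕ) (x : X) : ℝ :=
  (μ ((φ^[p]) ⁻¹' {x})).toReal / (μ {x}).toReal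


/-!
Since `C^n f = f ∘ φ^n` and every atom has positive finite mass, `C*^k B_m(C) C^k` is diagonal
in the basis of indicators of points: its entry at `y` is the `m`-th forward difference at `0`
of `t ↦ μ(φ^{-(t+k)}{y})`. So `C` is `k`-quasi-`m`-isometric iff all these differences vanish,
and then, `C` being also `(k+n)`-quasi-`m`-isometric, they vanish at every `n`. At a circuit
vertex this is (b); along a branch `φ^{-t}{x^r_{i,j}} = {x^r_{i,j+t}}`, so at branch vertices it
says that `j ↦ μ{x^r_{i,k+j+1}}` is a polynomial of degree `≤ m - 1`.

The degree drops to `m - 2` because of the circuit: the mass of `φ^{-(n+k)}` of the circuit grows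
at step `n` by exactly the total mass of the branch vertices at depth `n + k + 1`. Taking
`(m-1)`-st differences, the constant `(m-1)`-st differences of the branch sequences, which are
nonnegative since a polynomial that is nonnegative on `ℕ` has nonnegative leading coefficient,
sum to an `m`-th difference of the circuit mass, which vanishes.
-/

section FiniteDifferences

open Polynomial

lemma fwdDiff_iter_comp_natCast (f : ℝ → ℝ) (j : ℕ) :
    (fwdDiff 1)^[j] (fun n : ℕ => f n) = fun n : ℕ => (fwdDiff (1 : ℝ))^[j] f n := by
  induction j generalizing f with
  | zero => rfl
  | succ j ih =>
    rw [Function.iterate_succ_apply, Function.iterate_succ_apply, ← ih]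
    congr 1
    funext n
    simp [fwdDiff]

lemma AddMonoidHom.fwdDiff_iter_comp {M G G' : Type*} [AddCommMonoid M] [AddCommGroup G]
    [AddCommGroup G'] (ψ : G →+ G') (h : M) (g : M → G) (j : ℕ) :
    (fwdDiff h)^[j] (ψ ∘ g) = ψ ∘ (fwdDiff h)^[j] g := by
  induction j generalizing g with
  | zero => rfl
  | succ j ih =>
    rw [Function.iterate_succ_apply, Function.iterate_succ_apply, ← ih]
    congr 1
    funext x
    simp [fwdDiff]

lemma fwdDiff_iter_eq_zero_of_le {b : ℕ → ℝ} {d j : ℕ} (h : ∀ n, (fwdDiff 1)^[d] b n = 0)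
    (hdj : d ≤ j) (n : ℕ) : (fwdDiff 1)^[j] b n = 0 := by
  obtain ⟨i, rfl⟩ := Nat.exists_eq_add_of_le hdj
  rw [add_comm, Function.iterate_add_apply, funext h,
    Function.iterate_fixed (fwdDiff_const (1 : ℕ) (0 : ℝ))]

lemma fwdDiff_iter_eq_sum_reflect {R : Type*} [CommRing R] (g : ℕ → R) (m n : ℕ) :
    (fwdDiff 1)^[m] g n = ∑ j ∈ range (m + 1), (-1 : R) ^ j * m.choose j * g (n + (m - j)) := by
  rw [fwdDiff_iter_eq_sum_shift, ← sum_range_reflect]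
  refine sum_congr rfl fun j hj => ?_
  have hjm : j ≤ m := Nat.lt_succ_iff.1 (mem_range.1 hj)
  rw [show m + 1 - 1 - j = m - j by omega, show m - (m - j) = j by omega, Nat.choose_symm hjm,
    zsmul_eq_mul, smul_eq_mul, mul_one]
  push_cast
  ring

lemma sum_range_alternating_eq_fwdDiff_iter (b : ℕ → ℝ) (m n : ℕ) :
    ∑ p ∈ range (m + 1), (-1 : ℝ) ^ p * m.choose p * b (n + p)
      = (-1) ^ m * (fwdDiff 1)^[m] b n := by
  rw [fwdDiff_iter_eq_sum_shift, mul_sum]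
  refine sum_congr rfl fun p hp => ?_
  have hpm : p ≤ m := Nat.lt_succ_iff.1 (mem_range.1 hp)
  rw [zsmul_eq_mul, smul_eq_mul, mul_one]
  push_cast
  rw [← mul_assoc, ← mul_assoc, ← pow_add, show m + (m - p) = 2 * (m - p) + p by omega, pow_add,
    pow_mul, neg_one_sq, one_pow, one_mul]

lemma HasSum.fwdDiff_iter {ι M G : Type*} [AddCommMonoid M] [AddCommGroup G] [TopologicalSpace G]
    [IsTopologicalAddGroup G] {h : M} {a : ι → M → G} {f : M → G}
    (hf : ∀ x, HasSum (fun i => a i x) (f x)) (j : ℕ) (x : M) :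
    HasSum (fun i => (fwdDiff h)^[j] (a i) x) ((fwdDiff h)^[j] f x) := by
  induction j generalizing a f with
  | zero => exact hf x
  | succ j ih => exact ih fun x => (hf (x + h)).sub (hf x)

lemma Polynomial.fwdDiff_iter_eval_of_natDegree_le {R : Type*} [CommRing R] {q : R[X]} {d : ℕ}
    (hq : q.natDegree ≤ d) : (fwdDiff 1)^[d] q.eval = fun _ => q.coeff d * d.factorial := by
  rcases hq.lt_or_eq with hlt | rfl
  · rw [fwdDiff_iter_eq_zero_of_degree_lt hlt, coeff_eq_zero_of_natDegree_lt hlt]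
    simp only [zero_mul]
    rfl
  · rw [fwdDiff_iter_degree_eq_factorial]
    funext
    simp only [Pi.smul_apply, Pi.natCast_apply, smul_eq_mul]
    rfl

lemma Polynomial.leadingCoeff_nonneg_of_eval_natCast_nonneg {q : ℝ[X]}
    (h : ∀ n : ℕ, 0 ≤ q.eval (n : ℝ)) : 0 ≤ q.leadingCoeff := by
  by_contra! hneg
  rcases le_or_gt q.degree 0 with hdeg | hdeg
  · rw [leadingCoeff, natDegree_eq_zero_iff_degree_le_zero.2 hdeg, coeff_zero_eq_eval_zero] at hneg
    exact hneg.not_ge (by simpa using h 0)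
  · obtain ⟨n, hn⟩ := (((q.tendsto_atBot_of_leadingCoeff_nonpos hdeg hneg.le).comp
      tendsto_natCast_atTop_atTop).eventually (Filter.eventually_lt_atBot 0)).exists
    exact (h n).not_gt hn

lemma isPolySeq_iff_fwdDiff_iter {d : ℕ} {b : ℕ → ℝ} :
    IsPolySeq d b ↔ ∀ n, (fwdDiff 1)^[d + 1] b n = 0 := by
  constructor
  · rintro ⟨q, hq, hqb⟩ n
    rw [← funext hqb, fwdDiff_iter_comp_natCast q.eval,
      fwdDiff_iter_eq_zero_of_degree_lt (by omega)]
    rfl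
  · intro h
    refine ⟨∑ j ∈ range (d + 1), C ((fwdDiff 1)^[j] b 0 / j.factorial) * descPochhammer ℝ j,
      ?_, fun n => ?_⟩
    · refine natDegree_sum_le_of_forall_le _ _ fun j hj => natDegree_C_mul_le _ _ |>.trans ?_
      rw [descPochhammer_natDegree]
      exact Nat.lt_succ_iff.1 (mem_range.1 hj)
    · have hnewton := shift_eq_sum_fwdDiff_iter 1 b n 0
      simp only [zero_add, smul_eq_mul, mul_one, nsmul_eq_mul] at hnewton
      simp only [eval_finsetSum, eval_mul, eval_C]
      calc ∑ j ∈ range (d + 1),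
            (fwdDiff 1)^[j] b 0 / j.factorial * (descPochhammer ℝ j).eval (n : ℝ)
          = ∑ j ∈ range (d + 1), (n.choose j : ℝ) * (fwdDiff 1)^[j] b 0 := by
            refine sum_congr rfl fun j _ => ?_
            rw [Nat.cast_choose_eq_descPochhammer_div]
            ring
        _ = ∑ j ∈ range (n + d + 1), (n.choose j : ℝ) * (fwdDiff 1)^[j] b 0 :=
            sum_subset (range_subset_range.2 (by omega)) fun j _ hj => by
              rw [fwdDiff_iter_eq_zero_of_le h (by simpa using hj), mul_zero]
        _ = ∑ j ∈ range (n + 1), (n.choose j : ℝ) * (fwdDiff 1)^[j] b 0 :=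
            (sum_subset (range_subset_range.2 (by omega)) fun j _ hj => by
              rw [Nat.choose_eq_zero_of_lt (by simpa using hj), Nat.cast_zero, zero_mul]).symm
        _ = b n := hnewton.symm

lemma IsPolySeq.mono {d e : ℕ} {b : ℕ → ℝ} (h : IsPolySeq d b) (hde : d ≤ e) : IsPolySeq e b :=
  let ⟨q, hq, hqb⟩ := h
  ⟨q, hq.trans hde, hqb⟩

lemma IsPolySeq.fwdDiff_iter_nonneg {d : ℕ} {b : ℕ → ℝ} (h : IsPolySeq d b) (hb : ∀ n, 0 ≤ b n)
    (n : ℕ) : 0 ≤ (fwdDiff 1)^[d] b n := by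
  obtain ⟨q, hq, hqb⟩ := h
  rw [← funext hqb, fwdDiff_iter_comp_natCast q.eval, fwdDiff_iter_eval_of_natDegree_le hq]
  refine mul_nonneg ?_ (Nat.cast_nonneg _)
  rcases hq.lt_or_eq with hlt | rfl
  · rw [coeff_eq_zero_of_natDegree_lt hlt]
  · exact leadingCoeff_nonneg_of_eval_natCast_nonneg fun n => hqb n ▸ hb n

lemma IsPolySeq.of_hasSum {ι : Type*} {d : ℕ} {a : ι → ℕ → ℝ} {f : ℕ → ℝ}
    (ha : ∀ i, IsPolySeq (d + 1) (a i)) (hnn : ∀ i n, 0 ≤ a i n)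
    (hf : ∀ n, HasSum (fun i => a i n) (f n)) (hfd : IsPolySeq d f) (i : ι) :
    IsPolySeq d (a i) := by
  refine isPolySeq_iff_fwdDiff_iter.2 fun n => ?_
  have hsum := HasSum.fwdDiff_iter (h := 1) hf (d + 1) n
  rw [isPolySeq_iff_fwdDiff_iter.1 hfd n,
    hasSum_zero_iff_of_nonneg fun i => (ha i).fwdDiff_iter_nonneg (hnn i) n] at hsum
  exact congrFun hsum i

end FiniteDifferences

section QuasiIsometry

open ContinuousLinearMap
open scoped InnerProductSpace

variable {H : Type*} [NormedAddCommGroup H] [InnerProductSpace ℂ H] [CompleteSpace H]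

lemma IsQuasiIso.add {k m : ℕ} {T : H →L[ℂ] H} (h : IsQuasiIso k m T) (n : ℕ) :
    IsQuasiIso (k + n) m T := by
  unfold IsQuasiIso at h ⊢
  rw [pow_add, pow_add, (Commute.pow_pow_self _ k n).eq]
  calc _ = adjoint T ^ n * (adjoint T ^ k * BmOp m T * T ^ k) * T ^ n := by simp only [mul_assoc]
    _ = 0 := by rw [h, mul_zero, zero_mul]

lemma inner_adjoint_pow_mul_bmOp_mul_pow_apply (T : H →L[ℂ] H) (k m : ℕ) (u v : H) :
    ⟪v, (adjoint T ^ k * BmOp m T * T ^ k) u⟫_ℂ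
      = (fwdDiff 1)^[m] (fun t => ⟪(T ^ (t + k)) v, (T ^ (t + k)) u⟫_ℂ) 0 := by
  have hadj : ∀ n, adjoint T ^ n = adjoint (T ^ n) := fun n => by
    rw [← star_eq_adjoint, ← star_pow, star_eq_adjoint]
  rw [fwdDiff_iter_eq_sum_reflect, mul_apply_eq_comp, mul_apply_eq_comp, hadj,
    adjoint_inner_right, BmOp, _root_.sum_apply, inner_sum]
  refine sum_congr rfl fun j _ => ?_
  rw [_root_.smul_apply, inner_smul_right, mul_apply_eq_comp, hadj, adjoint_inner_right,
    ← mul_apply_eq_comp, ← pow_add, ← mul_apply_eq_comp (T ^ (m - j)), ← pow_add, zero_add]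

end QuasiIsometry

section CompositionOperator

open scoped InnerProductSpace

variable {X : Type*} [MeasurableSpace X] {μ : Measure X} {φ : X → X}
  {C : Lp ℂ 2 μ →L[ℂ] Lp ℂ 2 μ}

def IsCompositionOperator (φ : X → X) (C : Lp ℂ 2 μ →L[ℂ] Lp ℂ 2 μ) : Prop :=
  ∀ f : Lp ℂ 2 μ, (C f : X → ℂ) =ᵐ[μ] fun x => f (φ x)

lemma sum_hRN_eq_zero_iff {x : X} (hx0 : μ {x} ≠ 0) (hx : μ {x} ≠ ⊤) (k m : ℕ) :
    ∑ p ∈ range (m + 1), (-1 : ℝ) ^ p * m.choose p * hRN μ φ (p + k) x = 0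
      ↔ (fwdDiff 1)^[m] (fun t => μ.real (φ^[t + k] ⁻¹' {x})) 0 = 0 := by
  have hx' : μ.real {x} ≠ 0 := ENNReal.toReal_ne_zero.2 ⟨hx0, hx⟩
  have halt := sum_range_alternating_eq_fwdDiff_iter (fun t => μ.real (φ^[t + k] ⁻¹' {x})) m 0
  simp only [zero_add] at halt
  simp only [hRN, ← measureReal_def, ← mul_div_assoc, ← sum_div, div_eq_zero_iff, hx', or_false,
    halt, mul_eq_zero, pow_eq_zero_iff', neg_eq_zero, one_ne_zero, false_and, false_or]

lemma eq_of_ae_eq_of_forall_measure_singleton_ne_zero {α : Type*} (hμ0 : ∀ x, μ {x} ≠ 0)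
    {f g : X → α} (h : f =ᵐ[μ] g) : f = g := by
  rw [Filter.EventuallyEq, ae_eq_top.2 hμ0, Filter.eventually_top] at h
  exact funext h

lemma IsCompositionOperator.coeFn_pow_apply (hC : IsCompositionOperator φ C)
    (hμ0 : ∀ x, μ {x} ≠ 0) (n : ℕ) (f : Lp ℂ 2 μ) : ⇑((C ^ n) f) = fun x => f (φ^[n] x) := by
  induction n generalizing f with
  | zero => rfl
  | succ n ih =>
    rw [pow_succ, mul_apply_eq_comp, ih,
      eq_of_ae_eq_of_forall_measure_singleton_ne_zero hμ0 (hC f)]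
    funext x
    rw [Function.iterate_succ_apply']

variable [DiscreteMeasurableSpace X]

lemma IsCompositionOperator.pow_indicatorConstLp (hC : IsCompositionOperator φ C)
    (hμ0 : ∀ x, μ {x} ≠ 0) (n : ℕ) {s : Set X} (hs : μ s ≠ ⊤) :
    ∃ hs' : μ (φ^[n] ⁻¹' s) ≠ ⊤, (C ^ n) (indicatorConstLp 2 .of_discrete hs (1 : ℂ))
      = indicatorConstLp 2 .of_discrete hs' (1 : ℂ) := by
  have hcoe : ⇑((C ^ n) (indicatorConstLp 2 .of_discrete hs (1 : ℂ)))
      = (φ^[n] ⁻¹' s).indicator fun _ => 1 := by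
    rw [hC.coeFn_pow_apply hμ0,
      eq_of_ae_eq_of_forall_measure_singleton_ne_zero hμ0 indicatorConstLp_coeFn]
    rfl
  have hfin : μ (φ^[n] ⁻¹' s) ≠ ⊤ := by
    have := Lp.eLpNorm_ne_top ((C ^ n) (indicatorConstLp 2 .of_discrete hs (1 : ℂ)))
    rw [hcoe, eLpNorm_indicator_const .of_discrete two_ne_zero ENNReal.ofNat_ne_top] at this
    simpa using this
  exact ⟨hfin, Lp.ext ((Filter.EventuallyEq.of_eq hcoe).trans indicatorConstLp_coeFn.symm)⟩

lemma IsCompositionOperator.measure_preimage_iterate_ne_top (hC : IsCompositionOperator φ C)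
    (hμ0 : ∀ x, μ {x} ≠ 0) (n : ℕ) {s : Set X} (hs : μ s ≠ ⊤) : μ (φ^[n] ⁻¹' s) ≠ ⊤ :=
  (hC.pow_indicatorConstLp hμ0 n hs).1

lemma IsCompositionOperator.inner_pow_indicatorConstLp (hC : IsCompositionOperator φ C)
    (hμ0 : ∀ x, μ {x} ≠ 0) (n : ℕ) {s t : Set X} (hs : μ s ≠ ⊤) (ht : μ t ≠ ⊤) :
    ⟪(C ^ n) (indicatorConstLp 2 .of_discrete hs (1 : ℂ)),
      (C ^ n) (indicatorConstLp 2 .of_discrete ht (1 : ℂ))⟫_ℂ = μ.real (φ^[n] ⁻¹' (s ∩ t)) := by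
  obtain ⟨hs', hs_eq⟩ := hC.pow_indicatorConstLp hμ0 n hs
  obtain ⟨ht', ht_eq⟩ := hC.pow_indicatorConstLp hμ0 n ht
  rw [hs_eq, ht_eq, L2.inner_indicatorConstLp_one_indicatorConstLp_one, Set.preimage_inter]
  rfl

lemma MeasureTheory.Lp.eq_zero_of_forall_inner_indicatorConstLp (hμ0 : ∀ x, μ {x} ≠ 0)
    (hμ : ∀ x, μ {x} ≠ ⊤) {g : Lp ℂ 2 μ}
    (h : ∀ z, ⟪indicatorConstLp 2 .of_discrete (hμ z) (1 : ℂ), g⟫_ℂ = 0) : g = 0 := by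
  have hg : ∀ z, g z = 0 := fun z => by
    have hz := h z
    rw [L2.inner_indicatorConstLp_one, integral_singleton, smul_eq_zero] at hz
    exact hz.resolve_left (by simp [Measure.real, ENNReal.toReal_eq_zero_iff, hμ0 z, hμ z])
  exact Lp.ext ((Filter.EventuallyEq.of_eq (funext hg)).trans (Lp.coeFn_zero ℂ 2 μ).symm)

lemma ContinuousLinearMap.eq_zero_of_forall_inner_indicatorConstLp (hμ0 : ∀ x, μ {x} ≠ 0)
    (hμ : ∀ x, μ {x} ≠ ⊤) {T : Lp ℂ 2 μ →L[ℂ] Lp ℂ 2 μ}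
    (h : ∀ y z, ⟪indicatorConstLp 2 .of_discrete (hμ z) (1 : ℂ),
      T (indicatorConstLp 2 .of_discrete (hμ y) (1 : ℂ))⟫_ℂ = 0) : T = 0 := by
  have hadj : ∀ z, adjoint T (indicatorConstLp 2 .of_discrete (hμ z) (1 : ℂ)) = 0 := fun z =>
    Lp.eq_zero_of_forall_inner_indicatorConstLp hμ0 hμ fun y => by
      rw [adjoint_inner_right, ← inner_conj_symm, h, map_zero]
  ext1 f
  exact Lp.eq_zero_of_forall_inner_indicatorConstLp hμ0 hμ fun z => by
    rw [← adjoint_inner_left, hadj, inner_zero_left]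

lemma IsCompositionOperator.isQuasiIso_iff (hC : IsCompositionOperator φ C)
    (hμ0 : ∀ x, μ {x} ≠ 0) (hμ : ∀ x, μ {x} ≠ ⊤) (k m : ℕ) :
    IsQuasiIso k m C ↔ ∀ y, (fwdDiff 1)^[m] (fun t => μ.real (φ^[t + k] ⁻¹' {y})) 0 = 0 := by
  have hentry : ∀ y z, ⟪indicatorConstLp 2 .of_discrete (hμ z) (1 : ℂ),
      (ContinuousLinearMap.adjoint C ^ k * BmOp m C * C ^ k)
        (indicatorConstLp 2 .of_discrete (hμ y) (1 : ℂ))⟫_ℂ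
      = (fwdDiff 1)^[m] (fun t => μ.real (φ^[t + k] ⁻¹' ({z} ∩ {y}))) 0 := fun y z => by
    rw [inner_adjoint_pow_mul_bmOp_mul_pow_apply]
    simp_rw [hC.inner_pow_indicatorConstLp hμ0]
    exact congrFun (Complex.ofRealHom.toAddMonoidHom.fwdDiff_iter_comp 1 _ m) 0
  constructor
  · intro hQ y
    have hyy := hentry y y
    unfold IsQuasiIso at hQ
    rw [hQ, zero_apply, inner_zero_right, Set.inter_self] at hyy
    exact_mod_cast hyy.symm
  · intro h
    refine ContinuousLinearMap.eq_zero_of_forall_inner_indicatorConstLp hμ0 hμ fun y z => ?_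
    rw [hentry]
    rcases eq_or_ne z y with rfl | hzy
    · rw [Set.inter_self, h, Complex.ofReal_zero]
    · simp only [Set.singleton_inter_eq_empty.2 (Set.mem_singleton_iff.not.2 hzy),
        Set.preimage_empty, measureReal_empty]
      rw [Function.iterate_fixed (fwdDiff_const (1 : ℕ) (0 : ℝ)), Complex.ofReal_zero]

lemma IsCompositionOperator.fwdDiff_iter_eq_zero_of_isQuasiIso (hC : IsCompositionOperator φ C)
    (hμ0 : ∀ x, μ {x} ≠ 0) (hμ : ∀ x, μ {x} ≠ ⊤) {k m : ℕ} (hQ : IsQuasiIso k m C) (y : X)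
    (n : ℕ) : (fwdDiff 1)^[m] (fun t => μ.real (φ^[t + k] ⁻¹' {y})) n = 0 := by
  have hshift := fwdDiff_iter_comp_add 1 (fun t => μ.real (φ^[t + k] ⁻¹' {y})) n m 0
  rw [zero_add] at hshift
  rw [← hshift]
  simpa only [add_assoc, add_comm n k] using (hC.isQuasiIso_iff hμ0 hμ (k + n) m).1 (hQ.add n) y

lemma IsCompositionOperator.fwdDiff_iter_measureReal_preimage_eq_zero
    (hC : IsCompositionOperator φ C) (hμ0 : ∀ x, μ {x} ≠ 0) (hμ : ∀ x, μ {x} ≠ ⊤) {k m : ℕ}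
    (hQ : IsQuasiIso k m C) {s : Set X} (hs : s.Finite) (n : ℕ) :
    (fwdDiff 1)^[m] (fun t => μ.real (φ^[t + k] ⁻¹' s)) n = 0 := by
  have hsum : (fun t => μ.real (φ^[t + k] ⁻¹' s))
      = ∑ y ∈ hs.toFinset, fun t => μ.real (φ^[t + k] ⁻¹' {y}) := by
    funext t
    rw [Finset.sum_apply, sum_measureReal_preimage_singleton _ (fun _ _ => .of_discrete)
      fun y _ => hC.measure_preimage_iterate_ne_top hμ0 _ (hμ y), Set.Finite.coe_toFinset]
  rw [hsum, fwdDiff_iter_finsetSum, Finset.sum_apply]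
  exact sum_eq_zero fun y _ => hC.fwdDiff_iter_eq_zero_of_isQuasiIso hμ0 hμ hQ y n

end CompositionOperator

lemma hasSum_measureReal_image_singleton {X ι : Type*} [MeasurableSpace X]
    [DiscreteMeasurableSpace X] {μ : Measure X} {s : Set ι} (hs : s.Countable) {f : ι → X}
    (hf : s.InjOn f) (hfin : μ (f '' s) ≠ ⊤) :
    HasSum (fun i : s => μ.real {f i}) (μ.real (f '' s)) := by
  have hμ : μ (f '' s) = ∑' i : s, μ {f i} := by
    rw [Set.image_eq_iUnion]
    exact measure_biUnion hs (fun a ha b hb hab => Set.disjoint_singleton.2 (hf.ne ha hb hab))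
      fun _ _ => .of_discrete
  rw [hμ] at hfin
  rw [measureReal_def, hμ,
    ENNReal.tsum_toReal_eq fun i => ne_top_of_le_ne_top hfin (ENNReal.le_tsum i)]
  exact ENNReal.hasSum_toReal hfin

section Graph

variable {κ : ℕ} {Φ₂ : ℤ → ℕ} {X : Type*} {η : ℕ → ℕ∞} {xc : ℕ → X} {xb : ℕ → ℕ → ℕ → X}
  {φ : X → X}
  (hΦ₂ : ∀ q : ℤ, (1 ≤ Φ₂ q ∧ Φ₂ q ≤ κ) ∧ (κ : ℤ) ∣ q - (Φ₂ q : ℤ))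
  (hinj₂ : ∀ r r' i j : ℕ, 1 ≤ r → r ≤ κ → 1 ≤ r' → r' ≤ κ → 1 ≤ i → (i : ℕ∞) ≤ η r' →
    1 ≤ j → xc r ≠ xb r' i j)
  (hinj₃ : ∀ r i j r' i' j' : ℕ, 1 ≤ r → r ≤ κ → 1 ≤ i → (i : ℕ∞) ≤ η r → 1 ≤ j →
    1 ≤ r' → r' ≤ κ → 1 ≤ i' → (i' : ℕ∞) ≤ η r' → 1 ≤ j' →
    xb r i j = xb r' i' j' → r = r' ∧ i = i' ∧ j = j')
  (hsurj : ∀ x : X, (∃ r : ℕ, 1 ≤ r ∧ r ≤ κ ∧ x = xc r) ∨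
    ∃ r i j : ℕ, 1 ≤ r ∧ r ≤ κ ∧ 1 ≤ i ∧ (i : ℕ∞) ≤ η r ∧ 1 ≤ j ∧ x = xb r i j)
  (hφ₁ : ∀ r i j : ℕ, 1 ≤ r → r ≤ κ → 1 ≤ i → (i : ℕ∞) ≤ η r → 1 ≤ j →
    φ (xb r i (j + 1)) = xb r i j)
  (hφ₂ : ∀ r i : ℕ, 1 ≤ r → r ≤ κ → 1 ≤ i → (i : ℕ∞) ≤ η r → φ (xb r i 1) = xc r)
  (hφ₃ : ∀ r : ℕ, 1 ≤ r → r ≤ κ → φ (xc (Φ₂ ((r : ℤ) + 1))) = xc r)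

/-- The pairs `(r, i)` labelling the branches `{x^r_{i,j} : j ∈ ℕ}`, `r ∈ J_κ`, `i ∈ J_{η_r}`. -/
def branchIndex (κ : ℕ) (η : ℕ → ℕ∞) : Set (ℕ × ℕ) :=
  {p | 1 ≤ p.1 ∧ p.1 ≤ κ ∧ 1 ≤ p.2 ∧ (p.2 : ℕ∞) ≤ η p.1}

include hΦ₂ in
lemma Φ₂_eq_of_dvd {q : ℤ} {a : ℕ} (ha1 : 1 ≤ a) (ha2 : a ≤ κ) (hq : (κ : ℤ) ∣ q - a) :
    Φ₂ q = a := by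
  obtain ⟨⟨h1, h2⟩, hdvd⟩ := hΦ₂ q
  have hsub : (Φ₂ q : ℤ) - a = (q - a) - (q - Φ₂ q) := by ring
  have h0 := Int.eq_zero_of_abs_lt_dvd (hsub ▸ dvd_sub hq hdvd) (abs_lt.2 ⟨by omega, by omega⟩)
  omega

include hΦ₂ hφ₃ in
lemma apply_xc {s : ℕ} (hs1 : 1 ≤ s) (hs2 : s ≤ κ) : φ (xc s) = xc (Φ₂ ((s : ℤ) - 1)) := by
  obtain ⟨⟨h1, h2⟩, hdvd⟩ := hΦ₂ ((s : ℤ) - 1)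
  have hstep := hφ₃ _ h1 h2
  rwa [Φ₂_eq_of_dvd hΦ₂ hs1 hs2 (by simpa [sub_sub_eq_add_sub, add_comm] using dvd_neg.2 hdvd)]
    at hstep

include hΦ₂ hinj₂ hinj₃ hsurj hφ₁ hφ₂ hφ₃ in
lemma preimage_singleton_xb {r i j : ℕ} (hr1 : 1 ≤ r) (hr2 : r ≤ κ) (hi1 : 1 ≤ i)
    (hi2 : (i : ℕ∞) ≤ η r) (hj : 1 ≤ j) : φ ⁻¹' {xb r i j} = {xb r i (j + 1)} := by
  ext x
  simp only [Set.mem_preimage, Set.mem_singleton_iff]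
  refine ⟨fun hx => ?_, fun hx => hx ▸ hφ₁ r i j hr1 hr2 hi1 hi2 hj⟩
  rcases hsurj x with ⟨s, hs1, hs2, rfl⟩ | ⟨s, i', j', hs1, hs2, hi1', hi2', hj', rfl⟩
  · rw [apply_xc hΦ₂ hφ₃ hs1 hs2] at hx
    exact absurd hx (hinj₂ _ _ _ _ (hΦ₂ _).1.1 (hΦ₂ _).1.2 hr1 hr2 hi1 hi2 hj)
  obtain ⟨j'', rfl⟩ := Nat.exists_eq_add_of_le' hj'
  rcases Nat.eq_zero_or_pos j'' with rfl | hj''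
  · rw [zero_add, hφ₂ s i' hs1 hs2 hi1' hi2'] at hx
    exact absurd hx (hinj₂ _ _ _ _ hs1 hs2 hr1 hr2 hi1 hi2 hj)
  · rw [hφ₁ s i' j'' hs1 hs2 hi1' hi2' hj''] at hx
    obtain ⟨rfl, rfl, rfl⟩ := hinj₃ _ _ _ _ _ _ hs1 hs2 hi1' hi2' hj'' hr1 hr2 hi1 hi2 hj hx
    rfl

include hΦ₂ hinj₂ hinj₃ hsurj hφ₁ hφ₂ hφ₃ in
lemma preimage_iterate_singleton_xb {r i j : ℕ} (hr1 : 1 ≤ r) (hr2 : r ≤ κ) (hi1 : 1 ≤ i)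
    (hi2 : (i : ℕ∞) ≤ η r) (hj : 1 ≤ j) (n : ℕ) : φ^[n] ⁻¹' {xb r i j} = {xb r i (j + n)} := by
  induction n with
  | zero => rfl
  | succ n ih =>
    rw [Function.iterate_succ, Set.preimage_comp, ih,
      preimage_singleton_xb hΦ₂ hinj₂ hinj₃ hsurj hφ₁ hφ₂ hφ₃ hr1 hr2 hi1 hi2 (by omega),
      add_assoc]

include hΦ₂ hinj₂ hsurj hφ₁ hφ₂ hφ₃ in
lemma preimage_circuit :
    φ ⁻¹' (xc '' Set.Icc 1 κ)
      = xc '' Set.Icc 1 κ ∪ (fun p : ℕ × ℕ => xb p.1 p.2 1) '' branchIndex κ η := by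
  ext x
  refine ⟨fun ⟨r, ⟨hr1, hr2⟩, hx⟩ => ?_, ?_⟩
  · rcases hsurj x with ⟨s, hs1, hs2, rfl⟩ | ⟨s, i, j, hs1, hs2, hi1, hi2, hj, rfl⟩
    · exact .inl ⟨s, ⟨hs1, hs2⟩, rfl⟩
    obtain ⟨j', rfl⟩ := Nat.exists_eq_add_of_le' hj
    rcases Nat.eq_zero_or_pos j' with rfl | hj'
    · exact .inr ⟨(s, i), ⟨hs1, hs2, hi1, hi2⟩, rfl⟩
    · rw [hφ₁ s i j' hs1 hs2 hi1 hi2 hj'] at hx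
      exact absurd hx (hinj₂ _ _ _ _ hr1 hr2 hs1 hs2 hi1 hi2 hj')
  · rintro (⟨s, ⟨hs1, hs2⟩, rfl⟩ | ⟨⟨s, i⟩, ⟨hs1, hs2, hi1, hi2⟩, rfl⟩)
    · exact ⟨_, ⟨(hΦ₂ _).1.1, (hΦ₂ _).1.2⟩, (apply_xc hΦ₂ hφ₃ hs1 hs2).symm⟩
    · exact ⟨s, ⟨hs1, hs2⟩, (hφ₂ s i hs1 hs2 hi1 hi2).symm⟩

include hΦ₂ hinj₂ hinj₃ hsurj hφ₁ hφ₂ hφ₃ in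
lemma hasSum_measureReal_branch [MeasurableSpace X] [DiscreteMeasurableSpace X] (μ : Measure X)
    (n : ℕ) (hfin : μ (φ^[n + 1] ⁻¹' (xc '' Set.Icc 1 κ)) ≠ ⊤) :
    HasSum (fun p : branchIndex κ η => μ.real {xb p.1.1 p.1.2 (n + 1)})
      (μ.real (φ^[n + 1] ⁻¹' (xc '' Set.Icc 1 κ)) - μ.real (φ^[n] ⁻¹' (xc '' Set.Icc 1 κ))) := by
  have hlevel : φ^[n] ⁻¹' ((fun p : ℕ × ℕ => xb p.1 p.2 1) '' branchIndex κ η)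
      = (fun p : ℕ × ℕ => xb p.1 p.2 (n + 1)) '' branchIndex κ η := by
    simp only [Set.image_eq_iUnion, Set.preimage_iUnion₂]
    refine Set.iUnion₂_congr fun p hp => ?_
    rw [preimage_iterate_singleton_xb hΦ₂ hinj₂ hinj₃ hsurj hφ₁ hφ₂ hφ₃ hp.1 hp.2.1 hp.2.2.1
      hp.2.2.2 le_rfl, add_comm]
  have hdisj : Disjoint (φ^[n] ⁻¹' (xc '' Set.Icc 1 κ))
      ((fun p : ℕ × ℕ => xb p.1 p.2 (n + 1)) '' branchIndex κ η) := by
    rw [← hlevel]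
    refine Disjoint.preimage _ (Set.disjoint_left.2 ?_)
    rintro _ ⟨r, ⟨hr1, hr2⟩, rfl⟩ ⟨p, ⟨hp1, hp2, hp3, hp4⟩, hp⟩
    exact hinj₂ _ _ _ _ hr1 hr2 hp1 hp2 hp3 hp4 le_rfl hp.symm
  rw [Function.iterate_succ', Set.preimage_comp,
    preimage_circuit hΦ₂ hinj₂ hsurj hφ₁ hφ₂ hφ₃, Set.preimage_union, hlevel] at hfin ⊢
  have hbranch_fin := measure_ne_top_of_subset Set.subset_union_right hfin
  rw [measureReal_union hdisj .of_discrete (measure_ne_top_of_subset Set.subset_union_left hfin)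
    hbranch_fin, add_sub_cancel_left]
  refine hasSum_measureReal_image_singleton (f := fun p : ℕ × ℕ => xb p.1 p.2 (n + 1))
    (Set.to_countable _) ?_ hbranch_fin
  rintro ⟨r, i⟩ ⟨hr1, hr2, hi1, hi2⟩ ⟨r', i'⟩ ⟨hr1', hr2', hi1', hi2'⟩ h
  obtain ⟨rfl, rfl, -⟩ :=
    hinj₃ _ _ _ _ _ _ hr1 hr2 hi1 hi2 (by omega) hr1' hr2' hi1' hi2' (by omega) h
  rfl

include hΦ₂ hinj₂ hinj₃ hsurj hφ₁ hφ₂ hφ₃ in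
lemma IsQuasiIso.isPolySeq_branch [MeasurableSpace X] [DiscreteMeasurableSpace X] {μ : Measure X}
    (hμ0 : ∀ x, μ {x} ≠ 0) (hμ : ∀ x, μ {x} ≠ ⊤) {C : Lp ℂ 2 μ →L[ℂ] Lp ℂ 2 μ}
    (hC : IsCompositionOperator φ C) {k m : ℕ} (hm : 2 ≤ m) (hQ : IsQuasiIso k m C) {r i : ℕ}
    (hri : (r, i) ∈ branchIndex κ η) :
    IsPolySeq (m - 2) (fun j => μ.real {xb r i (k + j + 1)}) := by
  have hm' : m - 2 + 1 + 1 = m := by omega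
  have hbranch : ∀ p : branchIndex κ η,
      IsPolySeq (m - 2 + 1) (fun n => μ.real {xb p.1.1 p.1.2 (k + n + 1)}) := by
    rintro ⟨⟨r, i⟩, hr1, hr2, hi1, hi2⟩
    refine isPolySeq_iff_fwdDiff_iter.2 fun n => ?_
    rw [hm', ← hC.fwdDiff_iter_eq_zero_of_isQuasiIso hμ0 hμ hQ (xb r i 1) n]
    refine congrFun (congrArg _ (funext fun t => ?_)) n
    show μ.real {xb r i (k + t + 1)} = _
    rw [preimage_iterate_singleton_xb hΦ₂ hinj₂ hinj₃ hsurj hφ₁ hφ₂ hφ₃ hr1 hr2 hi1 hi2 le_rfl]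
    congr 3
    omega
  have hcircuit : IsPolySeq (m - 2)
      (fwdDiff 1 fun n => μ.real (φ^[n + k] ⁻¹' (xc '' Set.Icc 1 κ))) := by
    refine isPolySeq_iff_fwdDiff_iter.2 fun n => ?_
    rw [← Function.iterate_succ_apply, Nat.succ_eq_add_one, hm']
    exact hC.fwdDiff_iter_measureReal_preimage_eq_zero hμ0 hμ hQ ((Set.finite_Icc 1 κ).image xc) n
  have hcircuit_fin : μ (xc '' Set.Icc 1 κ) ≠ ⊤ := by
    rw [Set.image_eq_iUnion]
    exact (measure_biUnion_lt_top (Set.finite_Icc 1 κ) fun r _ => (hμ (xc r)).lt_top).ne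
  refine IsPolySeq.of_hasSum hbranch (fun _ _ => measureReal_nonneg) (fun n => ?_) hcircuit
    ⟨(r, i), hri⟩
  convert hasSum_measureReal_branch hΦ₂ hinj₂ hinj₃ hsurj hφ₁ hφ₂ hφ₃ μ (n + k)
    (hC.measure_preimage_iterate_ne_top hμ0 _ hcircuit_fin) using 1
  · funext p
    rw [add_comm k n]
  · rw [fwdDiff, add_right_comm]

end Graph

theorem stmt7_general
    (κ : ℕ)
    (Φ₂ : ℤ → ℕ)
    (hΦ₂ : ∀ q : ℤ, (1 ≤ Φ₂ q ∧ Φ₂ q ≤ κ) ∧ (κ : ℤ) ∣ q - (Φ₂ q : ℤ))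
    (X : Type*) [MeasurableSpace X]
    (hmeas : ∀ s : Set X, MeasurableSet s)
    (η : ℕ → ℕ∞)
    (xc : ℕ → X) (xb : ℕ → ℕ → ℕ → X)
    (hinj₂ : ∀ r r' i j : ℕ, 1 ≤ r → r ≤ κ → 1 ≤ r' → r' ≤ κ → 1 ≤ i → (i : ℕ∞) ≤ η r' →
      1 ≤ j → xc r ≠ xb r' i j)
    (hinj₃ : ∀ r i j r' i' j' : ℕ, 1 ≤ r → r ≤ κ → 1 ≤ i → (i : ℕ∞) ≤ η r → 1 ≤ j →
      1 ≤ r' → r' ≤ κ → 1 ≤ i' → (i' : ℕ∞) ≤ η r' → 1 ≤ j' →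
      xb r i j = xb r' i' j' → r = r' ∧ i = i' ∧ j = j')
    (hsurj : ∀ x : X, (∃ r : ℕ, 1 ≤ r ∧ r ≤ κ ∧ x = xc r) ∨
      ∃ r i j : ℕ, 1 ≤ r ∧ r ≤ κ ∧ 1 ≤ i ∧ (i : ℕ∞) ≤ η r ∧ 1 ≤ j ∧ x = xb r i j)
    (φ : X → X)
    (hφ₁ : ∀ r i j : ℕ, 1 ≤ r → r ≤ κ → 1 ≤ i → (i : ℕ∞) ≤ η r → 1 ≤ j →
      φ (xb r i (j + 1)) = xb r i j)
    (hφ₂ : ∀ r i : ℕ, 1 ≤ r → r ≤ κ → 1 ≤ i → (i : ℕ∞) ≤ η r → φ (xb r i 1) = xc r)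
    (hφ₃ : ∀ r : ℕ, 1 ≤ r → r ≤ κ → φ (xc (Φ₂ ((r : ℤ) + 1))) = xc r)
    (μ : Measure X)
    (hμ : ∀ x : X, 0 < μ {x} ∧ μ {x} < ⊤)
    (C : Lp ℂ 2 μ →L[ℂ] Lp ℂ 2 μ)
    (hC : ∀ f : Lp ℂ 2 μ, (C f : X → ℂ) =ᵐ[μ] fun x => f (φ x))
    (m k : ℕ) (hm : 2 ≤ m) :
    IsQuasiIso k m C ↔
      ((∀ r i : ℕ, 1 ≤ r → r ≤ κ → 1 ≤ i → (i : ℕ∞) ≤ η r →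
          IsPolySeq (m - 2) (fun j => (μ {xb r i (k + j + 1)}).toReal)) ∧
        ∀ r : ℕ, 1 ≤ r → r ≤ κ →
          ∑ p ∈ Finset.range (m + 1),
            (-1 : ℝ) ^ p * (m.choose p : ℝ) * hRN μ φ (p + k) (xc r) = 0) := by
  have : DiscreteMeasurableSpace X := ⟨hmeas⟩
  have hμ0 : ∀ x, μ {x} ≠ 0 := fun x => (hμ x).1.ne'
  have hμ' : ∀ x, μ {x} ≠ ⊤ := fun x => (hμ x).2.ne
  have hC' : IsCompositionOperator φ C := hC
  constructor
  · intro hQ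
    exact ⟨fun r i hr1 hr2 hi1 hi2 => hQ.isPolySeq_branch hΦ₂ hinj₂ hinj₃ hsurj hφ₁ hφ₂ hφ₃ hμ0 hμ'
        hC' hm ⟨hr1, hr2, hi1, hi2⟩,
      fun r _ _ => (sum_hRN_eq_zero_iff (hμ0 _) (hμ' _) k m).2
        (hC'.fwdDiff_iter_eq_zero_of_isQuasiIso hμ0 hμ' hQ _ 0)⟩
  · rintro ⟨hbranch, hcircuit⟩
    refine (hC'.isQuasiIso_iff hμ0 hμ' k m).2 fun y => ?_
    rcases hsurj y with ⟨r, hr1, hr2, rfl⟩ | ⟨r, i, j, hr1, hr2, hi1, hi2, hj, rfl⟩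
    · exact (sum_hRN_eq_zero_iff (hμ0 _) (hμ' _) k m).1 (hcircuit r hr1 hr2)
    · have hpoly := isPolySeq_iff_fwdDiff_iter.1
        ((hbranch r i hr1 hr2 hi1 hi2).mono (by omega : m - 2 ≤ m - 1)) (j - 1)
      rw [Nat.sub_add_cancel (by omega), ← zero_add (j - 1), ← fwdDiff_iter_comp_add] at hpoly
      convert hpoly using 3 with t
      rw [preimage_iterate_singleton_xb hΦ₂ hinj₂ hinj₃ hsurj hφ₁ hφ₂ hφ₃ hr1 hr2 hi1 hi2 hj]
      congr 3
      omega

theorem stmt7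
    (κ : ℕ) (hκ : 1 ≤ κ)
    (Φ₂ : ℤ → ℕ)
    (hΦ₂ : ∀ q : ℤ, (1 ≤ Φ₂ q ∧ Φ₂ q ≤ κ) ∧ (κ : ℤ) ∣ q - (Φ₂ q : ℤ))
    (X : Type*) [MeasurableSpace X] [Countable X]
    (hmeas : ∀ s : Set X, MeasurableSet s)
    (η : ℕ → ℕ∞)
    (hη : ∃ r : ℕ, 1 ≤ r ∧ r ≤ κ ∧ η r ≠ 0)
    (xc : ℕ → X) (xb : ℕ → ℕ → ℕ → X)
    (hinj₁ : ∀ r r' : ℕ, 1 ≤ r → r ≤ κ → 1 ≤ r' → r' ≤ κ → xc r = xc r' → r = r')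
    (hinj₂ : ∀ r r' i j : ℕ, 1 ≤ r → r ≤ κ → 1 ≤ r' → r' ≤ κ → 1 ≤ i → (i : ℕ∞) ≤ η r' →
      1 ≤ j → xc r ≠ xb r' i j)
    (hinj₃ : ∀ r i j r' i' j' : ℕ, 1 ≤ r → r ≤ κ → 1 ≤ i → (i : ℕ∞) ≤ η r → 1 ≤ j →
      1 ≤ r' → r' ≤ κ → 1 ≤ i' → (i' : ℕ∞) ≤ η r' → 1 ≤ j' →
      xb r i j = xb r' i' j' → r = r' ∧ i = i' ∧ j = j')
    (hsurj : ∀ x : X, (∃ r : ℕ, 1 ≤ r ∧ r ≤ κ ∧ x = xc r) ∨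
      ∃ r i j : ℕ, 1 ≤ r ∧ r ≤ κ ∧ 1 ≤ i ∧ (i : ℕ∞) ≤ η r ∧ 1 ≤ j ∧ x = xb r i j)
    (φ : X → X)
    (hφ₁ : ∀ r i j : ℕ, 1 ≤ r → r ≤ κ → 1 ≤ i → (i : ℕ∞) ≤ η r → 1 ≤ j →
      φ (xb r i (j + 1)) = xb r i j)
    (hφ₂ : ∀ r i : ℕ, 1 ≤ r → r ≤ κ → 1 ≤ i → (i : ℕ∞) ≤ η r → φ (xb r i 1) = xc r)
    (hφ₃ : ∀ r : ℕ, 1 ≤ r → r ≤ κ → φ (xc (Φ₂ ((r : ℤ) + 1))) = xc r)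
    (μ : Measure X) [SigmaFinite μ]
    (hμ : ∀ x : X, 0 < μ {x} ∧ μ {x} < ⊤)
    (C : Lp ℂ 2 μ →L[ℂ] Lp ℂ 2 μ)
    (hC : ∀ f : Lp ℂ 2 μ, (C f : X → ℂ) =ᵐ[μ] fun x => f (φ x))
    (m k : ℕ) (hm : 2 ≤ m) :
    IsQuasiIso k m C ↔
      ((∀ r i : ℕ, 1 ≤ r → r ≤ κ → 1 ≤ i → (i : ℕ∞) ≤ η r →
          IsPolySeq (m - 2) (fun j => (μ {xb r i (k + j + 1)}).toReal)) ∧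
        ∀ r : ℕ, 1 ≤ r → r ≤ κ →
          ∑ p ∈ Finset.range (m + 1),
            (-1 : ℝ) ^ p * (m.choose p : ℝ) * hRN μ φ (p + k) (xc r) = 0) :=
  stmt7_general κ Φ₂ hΦ₂ X hmeas η xc xb hinj₂ hinj₃ hsurj φ hφ₁ hφ₂ hφ₃ μ hμ C hC m k hm
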